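/- arXiv:2602.10469 — 5 statements merged into one kernel-verified Lean document; each statement's English description precedes it below -/
import Mathlib

section
/- For p < 1, p ≠ 0, the function u ↦ log((∑ᵢ Bᵢ uᵢ^p)^{1/p}) is concave on ℝ₊₊ⁿ. -/
open Finset Real

/-- Hölder-type inequality: sum of weighted geometric means ≤ geometric mean of sums. -/
lemma sum_rpow_mul_rpow_le {n : ℕ} (c d : Fin n → ℝ) (hc : ∀ i, 0 ≤ c i) (hd : ∀ i, 0 ≤ d i)
    {a b : ℝ} (ha : 0 < a) (hb : 0 < b) (hab : a + b = 1) :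
    ∑ i, (c i) ^ a * (d i) ^ b ≤ (∑ i, c i) ^ a * (∑ i, d i) ^ b := by
  have ha1 : a < 1 := by linarith
  have hpq : (1/a).HolderConjugate (1/b) := by
    rw [Real.holderConjugate_iff]; constructor
    · rw [lt_div_iff₀ ha]; linarith
    · simp only [one_div, inv_inv]; exact hab
  have hkc : ∀ i, |(c i) ^ a| ^ a⁻¹ = c i := fun i => by
    rw [abs_of_nonneg (Real.rpow_nonneg (hc i) a), ← Real.rpow_mul (hc i),
      mul_inv_cancel₀ ha.ne', Real.rpow_one]
  have hkd : ∀ i, |(d i) ^ b| ^ b⁻¹ = d i := fun i => by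
    rw [abs_of_nonneg (Real.rpow_nonneg (hd i) b), ← Real.rpow_mul (hd i),
      mul_inv_cancel₀ hb.ne', Real.rpow_one]
  have h := Real.inner_le_Lp_mul_Lq Finset.univ (fun i => (c i) ^ a) (fun i => (d i) ^ b) hpq
  simp only [one_div] at h
  simp only [hkc, hkd, inv_inv] at h
  exact h

/-- For `p < 1`, `p ≠ 0`, the logarithm of the weighted CES welfare,
`u ↦ (1/p) * log (∑ᵢ Bᵢ uᵢ^p)`, is concave on the positive orthant `ℝ₊₊ⁿ`. -/
theorem log_ces_welfare_concave
    (n : ℕ) (p : ℝ) (hp1 : p < 1) (hp0 : p ≠ 0)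
    (B : Fin n → ℝ) (hB : ∀ i, 0 < B i) :
    ConcaveOn ℝ {u : Fin n → ℝ | ∀ i, 0 < u i}
      (fun u => (1 / p) * Real.log (∑ i, B i * u i ^ p)) := by
  have hconv : Convex ℝ {u : Fin n → ℝ | ∀ i, 0 < u i} := by
    have hset : {u : Fin n → ℝ | ∀ i, 0 < u i}
        = Set.univ.pi (fun _ : Fin n => Set.Ioi (0:ℝ)) := by
      ext u; simp
    rw [hset]; exact convex_pi fun i _ => convex_Ioi 0
  rcases Nat.eq_zero_or_pos n with rfl | hn
  · have hfun : (fun u : Fin 0 → ℝ => (1/p) * Real.log (∑ i, B i * u i ^ p))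
        = fun _ => (1/p) * Real.log 0 := by funext u; simp
    rw [hfun]; exact concaveOn_const _ hconv
  refine ⟨hconv, ?_⟩
  intro x hx y hy a b ha hb hab
  rcases eq_or_lt_of_le ha with rfl | ha'
  · simp at hab; subst hab; simp
  rcases eq_or_lt_of_le hb with rfl | hb'
  · simp at hab; subst hab; simp
  have : Nonempty (Fin n) := ⟨⟨0, hn⟩⟩
  have hne : (Finset.univ : Finset (Fin n)).Nonempty := Finset.univ_nonempty
  set Sx := ∑ i, B i * x i ^ p with hSx
  set Sy := ∑ i, B i * y i ^ p with hSy
  have hSxpos : 0 < Sx := Finset.sum_pos (fun i _ => by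
    have := hx i; have := hB i; positivity) hne
  have hSypos : 0 < Sy := Finset.sum_pos (fun i _ => by
    have := hy i; have := hB i; positivity) hne
  have hz : ∀ i, (a • x + b • y) i = a * x i + b * y i := fun i => rfl
  have hzpos : ∀ i, 0 < a * x i + b * y i := fun i => by
    have := hx i; have := hy i; positivity
  simp only [smul_eq_mul]
  rw [← mul_assoc, ← mul_assoc, mul_comm a (1/p), mul_comm b (1/p), mul_assoc, mul_assoc,
    ← mul_add]
  have key : ∀ i, (a • x + b • y) i ^ p = (a * x i + b * y i) ^ p := fun i => by rw [hz]
  rcases lt_or_gt_of_ne hp0 with hpneg | hppos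
  · -- p < 0 : need log Sz ≤ a log Sx + b log Sy
    have hterm : ∀ i, B i * (a * x i + b * y i) ^ p ≤ (B i * x i ^ p) ^ a * (B i * y i ^ p) ^ b := by
      intro i
      have hxi := hx i; have hyi := hy i; have hBi := hB i
      have hgm : x i ^ a * y i ^ b ≤ a * x i + b * y i :=
        Real.geom_mean_le_arith_mean2_weighted ha hb hxi.le hyi.le hab
      have h1 : (a * x i + b * y i) ^ p ≤ (x i ^ a * y i ^ b) ^ p :=
        Real.rpow_le_rpow_of_nonpos (by positivity) hgm hpneg.le
      have h2 : (x i ^ a * y i ^ b) ^ p = (x i ^ p) ^ a * (y i ^ p) ^ b := by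
        rw [Real.mul_rpow (by positivity) (by positivity),
          ← Real.rpow_mul hxi.le, ← Real.rpow_mul hyi.le, mul_comm a p, mul_comm b p,
          Real.rpow_mul hxi.le, Real.rpow_mul hyi.le]
      have h3 : (B i * x i ^ p) ^ a * (B i * y i ^ p) ^ b
          = B i * ((x i ^ p) ^ a * (y i ^ p) ^ b) := by
        rw [Real.mul_rpow hBi.le (by positivity), Real.mul_rpow hBi.le (by positivity)]
        rw [show (B i)^a * (x i ^p)^a * ((B i)^b * (y i^p)^b)
            = ((B i)^a * (B i)^b) * ((x i ^p)^a * (y i^p)^b) by ring,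
          ← Real.rpow_add hBi, hab, Real.rpow_one]
      rw [h3]
      calc B i * (a * x i + b * y i) ^ p ≤ B i * (x i ^ a * y i ^ b) ^ p := by
            exact mul_le_mul_of_nonneg_left h1 hBi.le
        _ = B i * ((x i ^ p) ^ a * (y i ^ p) ^ b) := by rw [h2]
    have hSz : ∑ i, B i * (a • x + b • y) i ^ p ≤ Sx ^ a * Sy ^ b := by
      calc ∑ i, B i * (a • x + b • y) i ^ p
          ≤ ∑ i, (B i * x i ^ p) ^ a * (B i * y i ^ p) ^ b := by
            apply Finset.sum_le_sum; intro i _; rw [key i]; exact hterm i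
        _ ≤ Sx ^ a * Sy ^ b := sum_rpow_mul_rpow_le _ _
            (fun i => by have := hx i; have := hB i; positivity)
            (fun i => by have := hy i; have := hB i; positivity) ha' hb' hab
    have hlog : Real.log (∑ i, B i * (a • x + b • y) i ^ p) ≤ a * Real.log Sx + b * Real.log Sy := by
      have hSzpos : 0 < ∑ i, B i * (a • x + b • y) i ^ p :=
        Finset.sum_pos (fun i _ => by rw [key i]; have := hB i; have := hzpos i; positivity) hne
      calc Real.log (∑ i, B i * (a • x + b • y) i ^ p) ≤ Real.log (Sx ^ a * Sy ^ b) :=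
            Real.log_le_log hSzpos hSz
        _ = a * Real.log Sx + b * Real.log Sy := by
            rw [Real.log_mul (by positivity) (by positivity), Real.log_rpow hSxpos,
              Real.log_rpow hSypos]
    have h1p : 1/p < 0 := by
      apply div_neg_of_pos_of_neg one_pos hpneg
    nlinarith [hlog, mul_le_mul_of_nonpos_left hlog h1p.le]
  · -- 0 < p < 1 : need a log Sx + b log Sy ≤ log Sz
    have hterm : ∀ i, a * (x i ^ p) + b * (y i ^ p) ≤ (a * x i + b * y i) ^ p := by
      intro i
      have := (Real.concaveOn_rpow hppos.le hp1.le).2 (Set.mem_Ici.2 (hx i).le)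
        (Set.mem_Ici.2 (hy i).le) ha hb hab
      simpa [smul_eq_mul] using this
    have hSz : Sx ^ a * Sy ^ b ≤ ∑ i, B i * (a • x + b • y) i ^ p := by
      calc Sx ^ a * Sy ^ b ≤ a * Sx + b * Sy :=
            Real.geom_mean_le_arith_mean2_weighted ha hb hSxpos.le hSypos.le hab
        _ = ∑ i, B i * (a * (x i ^ p) + b * (y i ^ p)) := by
            rw [hSx, hSy, Finset.mul_sum, Finset.mul_sum, ← Finset.sum_add_distrib]
            apply Finset.sum_congr rfl; intro i _; ring
        _ ≤ ∑ i, B i * (a • x + b • y) i ^ p := by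
            apply Finset.sum_le_sum; intro i _; rw [key i]
            exact mul_le_mul_of_nonneg_left (hterm i) (hB i).le
    have hlog : a * Real.log Sx + b * Real.log Sy ≤ Real.log (∑ i, B i * (a • x + b • y) i ^ p) := by
      calc a * Real.log Sx + b * Real.log Sy = Real.log (Sx ^ a * Sy ^ b) := by
            rw [Real.log_mul (by positivity) (by positivity), Real.log_rpow hSxpos,
              Real.log_rpow hSypos]
        _ ≤ _ := Real.log_le_log (by positivity) hSz
    have h1p : 0 < 1/p := by positivity
    nlinarith [mul_le_mul_of_nonneg_left hlog h1p.le]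
end

section
/- Greedy allocation inequality for p ∈ (0,1): if W_i, W_j ≥ 0, a, b > 0, and (W_i + a)^p - W_i^p ≤ (W_j + b)^p - W_j^p, then W_i ≥ (a/b)^{1/(1-p)} · W_j - a. -/
/-- Greedy allocation inequality for `p ∈ (0,1)`: if the myopic increase in `∑ u^p`
from giving the item (value `b`) to agent `j` is at least that from giving it
(value `a`) to agent `i`, then `Wᵢ ≥ (a/b)^{1/(1-p)} Wⱼ - a`. -/
theorem greedy_ineq_pos_p
    (p : ℝ) (hp0 : 0 < p) (hp1 : p < 1)
    (Wi Wj a b : ℝ) (hWi : 0 ≤ Wi) (hWj : 0 ≤ Wj) (ha : 0 < a) (hb : 0 < b)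
    (h : (Wi + a) ^ p - Wi ^ p ≤ (Wj + b) ^ p - Wj ^ p) :
    (a / b) ^ (1 / (1 - p)) * Wj - a ≤ Wi := by
  set c : ℝ := (a / b) ^ (1 / (1 - p)) with hc
  have h1p : (0:ℝ) < 1 - p := by linarith
  have hab : 0 < a / b := div_pos ha hb
  have hcpos : 0 < c := Real.rpow_pos_of_pos hab _
  by_contra hcon
  push_neg at hcon
  have hX : Wi + a < c * Wj := by linarith
  have hc1 : c ^ (1 - p) = a / b := by
    rw [hc, ← Real.rpow_mul hab.le, one_div_mul_cancel h1p.ne', Real.rpow_one]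
  have hcb : c * b = a * c ^ p := by
    have hsum : c ^ p * c ^ (1 - p) = c := by
      rw [← Real.rpow_add hcpos]; norm_num
    have : c * b = c ^ p * (a / b) * b := by rw [← hc1, hsum]
    rw [this]; field_simp
  have hcp : 0 < c ^ p := Real.rpow_pos_of_pos hcpos p
  have hconc := Real.strictConcaveOn_rpow hp0 hp1
  have h0 : (0:ℝ) ≤ Wi + a := by linarith
  have h2 : (0:ℝ) ≤ c * Wj := by positivity
  have h3 : (0:ℝ) ≤ c * Wj + a * c ^ p := by positivity
  have hlt2 : Wi + a < c * Wj := hX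
  have hlt3 : c * Wj < c * Wj + a * c ^ p := by nlinarith
  -- slope comparisons
  have s1 := hconc.slope_anti_adjacent (Set.mem_Ici.2 hWi) (Set.mem_Ici.2 h2)
      (show Wi < Wi + a by linarith) hlt2
  have s2 := hconc.concaveOn.slope_anti_adjacent (Set.mem_Ici.2 h0) (Set.mem_Ici.2 h3)
      hlt2 hlt3
  -- scaling identities
  have e1 : (c * Wj + a * c ^ p) ^ p = c ^ p * (Wj + b) ^ p := by
    have : c * Wj + a * c ^ p = c * (Wj + b) := by rw [mul_add, hcb]
    rw [this, Real.mul_rpow hcpos.le (by linarith)]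
  have e2 : (c * Wj) ^ p = c ^ p * Wj ^ p := Real.mul_rpow hcpos.le hWj
  -- combine
  have key : ((Wj + b) ^ p - Wj ^ p) / a < ((Wi + a) ^ p - Wi ^ p) / a := by
    have hslope3 : ((c * Wj + a * c ^ p) ^ p - (c * Wj) ^ p) / (c * Wj + a * c ^ p - c * Wj)
        = ((Wj + b) ^ p - Wj ^ p) / a := by
      rw [e1, e2]
      have : c * Wj + a * c ^ p - c * Wj = a * c ^ p := by ring
      rw [this, ← mul_sub]
      rw [mul_comm a (c ^ p), mul_div_mul_left _ _ hcp.ne']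
    have hslope1 : ((Wi + a) ^ p - Wi ^ p) / (Wi + a - Wi) = ((Wi + a) ^ p - Wi ^ p) / a := by
      norm_num
    rw [hslope3] at s2
    rw [hslope1] at s1
    calc ((Wj + b) ^ p - Wj ^ p) / a
        ≤ ((c * Wj) ^ p - (Wi + a) ^ p) / (c * Wj - (Wi + a)) := s2
      _ < ((Wi + a) ^ p - Wi ^ p) / a := s1
  have := (div_lt_div_iff_of_pos_right ha).mp key
  linarith
end

section
/- Greedy allocation inequality for p < 0: if W_i, W_j > 0, a, b > 0, and (W_i + a)^p - W_i^p ≥ (W_j + b)^p - W_j^p, then a·(W_i + a)^{p-1} ≤ b·W_j^{p-1}, and consequently W_i ≥ (a/b)^{1/(1-p)}·W_j - a. -/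
open Real

/-- Bernoulli's inequality for negative exponents: for `t > 0` and `p < 0`,
`1 + p * (t - 1) ≤ t ^ p`. -/
lemma bernoulli_neg {t p : ℝ} (ht : 0 < t) (hp : p < 0) :
    1 + p * (t - 1) ≤ t ^ p := by
  set s : ℝ := t - 1 with hs
  have hs1 : -1 ≤ s := by simp only [hs]; linarith
  rcases le_or_gt (-p) 1 with hq | hq
  · -- -1 ≤ p < 0
    have hA : t ^ (-p) ≤ 1 + (-p) * s := by
      have := rpow_one_add_le_one_add_mul_self hs1 (by linarith : (0:ℝ) ≤ -p) hq
      have ht' : 1 + s = t := by simp [hs]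
      rwa [ht'] at this
    have hApos : 0 < t ^ (-p) := Real.rpow_pos_of_pos ht _
    have htp : t ^ p = (t ^ (-p))⁻¹ := by
      rw [← Real.rpow_neg ht.le, neg_neg]
    rcases le_or_gt (1 + p * s) 0 with h0 | h0
    · calc 1 + p * s ≤ 0 := h0
        _ ≤ t ^ p := (Real.rpow_pos_of_pos ht _).le
    · rw [htp, ← one_div, le_div_iff₀ hApos]
      nlinarith [sq_nonneg (p * s)]
  · -- p < -1
    have ht1 : 0 < t⁻¹ := inv_pos.mpr ht
    have hs1' : (-1:ℝ) ≤ t⁻¹ - 1 := by linarith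
    have hB := one_add_mul_self_le_rpow_one_add hs1' hq.le
    have heq : (1 + (t⁻¹ - 1)) ^ (-p) = t ^ p := by
      rw [show (1 + (t⁻¹ - 1)) = t⁻¹ by ring, ← Real.rpow_neg_one t,
        ← Real.rpow_mul ht.le]
      norm_num
    rw [heq] at hB
    refine le_trans ?_ hB
    have h2 : t * t⁻¹ = 1 := mul_inv_cancel₀ ht.ne'
    have key : 2 ≤ t + t⁻¹ := by nlinarith [sq_nonneg (t - 1)]
    nlinarith

/-- Tangent line inequality for `x ↦ x^p`, `p < 0`:
`p y^{p-1} (x - y) ≤ x^p - y^p`. -/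
lemma tangent_le {x y p : ℝ} (hx : 0 < x) (hy : 0 < y) (hp : p < 0) :
    p * y ^ (p - 1) * (x - y) ≤ x ^ p - y ^ p := by
  have ht : 0 < x / y := div_pos hx hy
  have hb := bernoulli_neg ht hp
  have hyp : 0 < y ^ p := Real.rpow_pos_of_pos hy _
  have hmul := mul_le_mul_of_nonneg_left hb hyp.le
  have h1 : y ^ p * (x / y) ^ p = x ^ p := by
    rw [← Real.mul_rpow hy.le ht.le, mul_div_cancel₀ _ hy.ne']
  have h2 : y ^ (p - 1) = y ^ p / y := by
    rw [Real.rpow_sub hy, Real.rpow_one]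
  rw [h1] at hmul
  rw [h2]
  have h3 : y ^ p * (1 + p * (x / y - 1)) = y ^ p + p * (y ^ p / y) * (x - y) := by
    field_simp
  rw [h3] at hmul
  linarith

/-- Greedy allocation inequality for `p < 0`: if
`(Wᵢ + a)^p - Wᵢ^p ≥ (Wⱼ + b)^p - Wⱼ^p`, then `a (Wᵢ + a)^{p-1} ≤ b Wⱼ^{p-1}`,
and consequently `Wᵢ ≥ (a/b)^{1/(1-p)} Wⱼ - a`. -/
theorem greedy_ineq_neg_p
    (p : ℝ) (hp : p < 0)
    (Wi Wj a b : ℝ) (hWi : 0 < Wi) (hWj : 0 < Wj) (ha : 0 < a) (hb : 0 < b)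
    (h : (Wj + b) ^ p - Wj ^ p ≤ (Wi + a) ^ p - Wi ^ p) :
    a * (Wi + a) ^ (p - 1) ≤ b * Wj ^ (p - 1) ∧
      (a / b) ^ (1 / (1 - p)) * Wj - a ≤ Wi := by
  have hWia : 0 < Wi + a := by linarith
  have hWjb : 0 < Wj + b := by linarith
  have hX : 0 < (Wi + a) ^ (p - 1) := Real.rpow_pos_of_pos hWia _
  have hY : 0 < Wj ^ (p - 1) := Real.rpow_pos_of_pos hWj _
  -- tangent at Wi + a, evaluated at Wi: gives upper bound for i-side increment
  have hI := tangent_le hWi hWia hp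
  -- tangent at Wj, evaluated at Wj + b: gives lower bound for j-side increment
  have hJ := tangent_le hWjb hWj hp
  have hchain : p * (b * Wj ^ (p - 1)) ≤ p * (a * (Wi + a) ^ (p - 1)) := by nlinarith
  have first : a * (Wi + a) ^ (p - 1) ≤ b * Wj ^ (p - 1) := by
    by_contra h'
    push_neg at h'
    have := mul_lt_mul_of_neg_left h' hp
    linarith
  refine ⟨first, ?_⟩
  have h1p : (0:ℝ) < 1 - p := by linarith
  have e1 : (Wi + a) ^ (p - 1) = ((Wi + a) ^ (1 - p))⁻¹ := by
    rw [← Real.rpow_neg hWia.le]; ring_nf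
  have e2 : Wj ^ (p - 1) = (Wj ^ (1 - p))⁻¹ := by
    rw [← Real.rpow_neg hWj.le]; ring_nf
  have hA : 0 < (Wi + a) ^ (1 - p) := Real.rpow_pos_of_pos hWia _
  have hB : 0 < Wj ^ (1 - p) := Real.rpow_pos_of_pos hWj _
  rw [e1, e2] at first
  have cross : a * Wj ^ (1 - p) ≤ b * (Wi + a) ^ (1 - p) := by
    have h' := mul_le_mul_of_nonneg_right first (mul_pos hA hB).le
    have eA : a * ((Wi + a) ^ (1 - p))⁻¹ * ((Wi + a) ^ (1 - p) * Wj ^ (1 - p))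
        = a * Wj ^ (1 - p) := by field_simp
    have eB : b * (Wj ^ (1 - p))⁻¹ * ((Wi + a) ^ (1 - p) * Wj ^ (1 - p))
        = b * (Wi + a) ^ (1 - p) := by field_simp
    rw [eA, eB] at h'
    exact h'
  have hdiv : a / b ≤ ((Wi + a) / Wj) ^ (1 - p) := by
    rw [Real.div_rpow hWia.le hWj.le, div_le_div_iff₀ hb hB]
    linarith
  have hmono := Real.rpow_le_rpow (by positivity : (0:ℝ) ≤ a / b) hdiv
    (by positivity : (0:ℝ) ≤ 1 / (1 - p))
  have hsimp : (((Wi + a) / Wj) ^ (1 - p)) ^ (1 / (1 - p)) = (Wi + a) / Wj := by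
    rw [← Real.rpow_mul (by positivity), mul_one_div, div_self h1p.ne', Real.rpow_one]
  rw [hsimp] at hmono
  rw [le_div_iff₀ hWj] at hmono
  linarith
end

section
/- Safe-region volume lower bound: for any β ∈ [β̲, ∞)ⁿ with β̲ > 0 and any ι > 0, the set S(β;ι) of value vectors v ∈ [0, v̄]ⁿ such that argmax_i βᵢ'vᵢ = argmax_i βᵢvᵢ for all β' with ‖β' - β‖_∞ ≤ ι and β' ≥ 0, has Lebesgue measure at least v̄ⁿ·(1 - 2nι/β̲). -/
open MeasureTheory Set

/-- Volume of a "slab" in the cube `[0,v̄]^{m+1}` where coordinate `i` is constrained to an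
interval of length `c` depending measurably on the other coordinates. -/
lemma slab_volume_le (m : ℕ) (i : Fin (m + 1)) (vbar c : ℝ) (hv : 0 ≤ vbar) (hc : 0 ≤ c)
    (g : (Fin m → ℝ) → ℝ) (hg : Measurable g) :
    volume {v : Fin (m + 1) → ℝ | (∀ j, v (i.succAbove j) ∈ Set.Icc 0 vbar) ∧
        v i ∈ Set.Icc (g fun j => v (i.succAbove j)) ((g fun j => v (i.succAbove j)) + c)} ≤
      ENNReal.ofReal (c * vbar ^ m) := by
  set T : Set (ℝ × (Fin m → ℝ)) :=
    {p | (∀ j, p.2 j ∈ Set.Icc (0:ℝ) vbar) ∧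
      p.1 ∈ Set.Icc (g p.2) (g p.2 + c)} with hTdef
  have hT : MeasurableSet T := by
    apply MeasurableSet.inter
    · show MeasurableSet {p : ℝ × (Fin m → ℝ) | ∀ j, p.2 j ∈ Set.Icc (0:ℝ) vbar}
      have : {p : ℝ × (Fin m → ℝ) | ∀ j, p.2 j ∈ Set.Icc (0:ℝ) vbar}
          = Prod.snd ⁻¹' (Set.pi Set.univ (fun _ => Set.Icc (0:ℝ) vbar)) := by
        ext p; simp [Set.mem_pi, Pi.le_def, forall_and]
      rw [this]
      exact measurable_snd (MeasurableSet.univ_pi fun _ => measurableSet_Icc)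
    · apply MeasurableSet.inter
      · exact measurableSet_le (hg.comp measurable_snd) measurable_fst
      · exact measurableSet_le measurable_fst ((hg.comp measurable_snd).add_const c)
  have hpre : {v : Fin (m + 1) → ℝ | (∀ j, v (i.succAbove j) ∈ Set.Icc 0 vbar) ∧
        v i ∈ Set.Icc (g fun j => v (i.succAbove j)) ((g fun j => v (i.succAbove j)) + c)}
      = (MeasurableEquiv.piFinSuccAbove (fun _ => ℝ) i) ⁻¹' T := by
    ext v
    constructor
    · rintro ⟨h1, h2⟩; exact ⟨h1, h2⟩
    · rintro ⟨h1, h2⟩; exact ⟨h1, h2⟩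
  rw [hpre]
  have hmp := measurePreserving_piFinSuccAbove (fun _ : Fin (m+1) => (volume : Measure ℝ)) i
  rw [volume_pi, hmp.measure_preimage hT.nullMeasurableSet]
  have hslice : ∀ y : Fin m → ℝ, (volume : Measure ℝ) ((fun x => (x, y)) ⁻¹' T)
      = Set.indicator (Set.pi Set.univ (fun _ => Set.Icc 0 vbar))
          (fun _ => ENNReal.ofReal c) y := by
    intro y
    by_cases hy : y ∈ Set.pi Set.univ (fun _ : Fin m => Set.Icc (0:ℝ) vbar)
    · have hy' : ∀ j, y j ∈ Set.Icc (0:ℝ) vbar := fun j => hy j trivial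
      have : (fun x => (x, y)) ⁻¹' T = Set.Icc (g y) (g y + c) := by
        ext x
        simp only [hTdef, Set.mem_preimage, Set.mem_setOf_eq, and_iff_right hy']
      rw [this, Real.volume_Icc, Set.indicator_of_mem hy]
      simp
    · have hy' : ¬ ∀ j, y j ∈ Set.Icc (0:ℝ) vbar := fun h => hy fun j _ => h j
      have : (fun x => (x, y)) ⁻¹' T = ∅ := by
        ext x
        simp only [hTdef, Set.mem_preimage, Set.mem_setOf_eq, Set.mem_empty_iff_false,
          iff_false, not_and]
        exact fun h => absurd h hy'
      rw [this, Set.indicator_of_notMem hy]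
      simp
  rw [Measure.prod_apply_symm hT]
  simp_rw [hslice]
  rw [lintegral_indicator_const (MeasurableSet.univ_pi fun _ => measurableSet_Icc)]
  have : (Measure.pi fun _ : Fin m => (volume : Measure ℝ))
      (Set.pi Set.univ (fun _ => Set.Icc 0 vbar)) = ENNReal.ofReal (vbar ^ m) := by
    rw [Measure.pi_pi]
    simp [Real.volume_Icc, ← ENNReal.ofReal_pow hv]
  rw [this, ← ENNReal.ofReal_mul hc]

/-- Safe-region volume lower bound: for `β ∈ [β̲, ∞)ⁿ` with `β̲ > 0` and `ι > 0`,
the set of value vectors `v ∈ [0, v̄]ⁿ` on which every nonnegative `β'` with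
`‖β' - β‖_∞ ≤ ι` induces the same argmax set for `i ↦ βᵢ' vᵢ` as `β` does,
has Lebesgue measure at least `v̄ⁿ (1 - 2nι/β̲)`. -/
theorem safe_region_volume_lower_bound
    (n : ℕ) (hn : 1 ≤ n) (vbar : ℝ) (hv : 0 < vbar)
    (βlow : ℝ) (hβl : 0 < βlow)
    (β : Fin n → ℝ) (hβ : ∀ i, βlow ≤ β i) (ι : ℝ) (hι : 0 < ι) :
    ENNReal.ofReal (vbar ^ n * (1 - 2 * n * ι / βlow)) ≤
      MeasureTheory.volume {v : Fin n → ℝ |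
        (∀ i, v i ∈ Set.Icc 0 vbar) ∧
        ∀ β' : Fin n → ℝ, (∀ i, |β' i - β i| ≤ ι) → (∀ i, 0 ≤ β' i) →
          {i | ∀ j, β' j * v j ≤ β' i * v i} = {i | ∀ j, β j * v j ≤ β i * v i}} := by
  classical
  obtain ⟨m, rfl⟩ : ∃ m, n = m + 1 := ⟨n - 1, (Nat.succ_pred_eq_of_pos hn).symm⟩
  set S := {v : Fin (m+1) → ℝ |
      (∀ i, v i ∈ Set.Icc 0 vbar) ∧
      ∀ β' : Fin (m+1) → ℝ, (∀ i, |β' i - β i| ≤ ι) → (∀ i, 0 ≤ β' i) →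
        {i | ∀ j, β' j * v j ≤ β' i * v i} = {i | ∀ j, β j * v j ≤ β i * v i}} with hSdef
  have hβpos : ∀ i, 0 < β i := fun i => lt_of_lt_of_le hβl (hβ i)
  set c : ℝ := 2 * ι * vbar / βlow with hcdef
  have hcpos : 0 < c := by positivity
  set M : Fin (m+1) → (Fin (m+1) → ℝ) → ℝ :=
    fun i v => Finset.univ.sup' Finset.univ_nonempty
      (fun j => if j = i then 0 else β j * v j) with hMdef
  set A : Fin (m+1) → Set (Fin (m+1) → ℝ) :=
    fun i => {v | (∀ j, v j ∈ Set.Icc (0:ℝ) vbar) ∧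
      M i v ≤ β i * v i ∧ β i * v i ≤ M i v + 2 * ι * vbar} with hAdef
  -- covering claim
  have hcover : {v : Fin (m+1) → ℝ | ∀ j, v j ∈ Set.Icc (0:ℝ) vbar} ⊆ S ∪ ⋃ i, A i := by
    intro v hv0
    by_cases hvA : v ∈ ⋃ i, A i
    · exact Or.inr hvA
    · left
      refine ⟨hv0, ?_⟩
      obtain ⟨i0, -, hmax⟩ := Finset.exists_max_image Finset.univ
        (fun j => β j * v j) Finset.univ_nonempty
      have hvnn : ∀ j, 0 ≤ v j := fun j => (hv0 j).1
      have hvub : ∀ j, v j ≤ vbar := fun j => (hv0 j).2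
      have hMle : M i0 v ≤ β i0 * v i0 := by
        apply Finset.sup'_le
        intro j _
        split_ifs with hj
        · exact mul_nonneg (hβpos i0).le (hvnn i0)
        · exact hmax j (Finset.mem_univ j)
      have hnotA : ¬ (M i0 v ≤ β i0 * v i0 ∧ β i0 * v i0 ≤ M i0 v + 2*ι*vbar) := by
        intro h
        exact hvA (Set.mem_iUnion.2 ⟨i0, ⟨hv0, h⟩⟩)
      have hgap : M i0 v + 2*ι*vbar < β i0 * v i0 := by
        by_contra hle
        push_neg at hle
        exact hnotA ⟨hMle, hle⟩
      have hjle : ∀ j, j ≠ i0 → β j * v j ≤ M i0 v := by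
        intro j hj
        have h := Finset.le_sup' (fun j => if j = i0 then (0:ℝ) else β j * v j)
          (Finset.mem_univ j)
        rw [if_neg hj] at h
        exact h
      intro β' hβ'close hβ'nn
      have hkey : ∀ j, j ≠ i0 → β' j * v j < β' i0 * v i0 := by
        intro j hj
        have h1 : β' j ≤ β j + ι := by
          have := abs_le.1 (hβ'close j); linarith [this.2]
        have h2 : β i0 - ι ≤ β' i0 := by
          have := abs_le.1 (hβ'close i0); linarith [this.1]
        have h3 : β' j * v j ≤ β j * v j + ι * v j := by nlinarith [hvnn j]
        have h4 : β i0 * v i0 - ι * v i0 ≤ β' i0 * v i0 := by nlinarith [hvnn i0]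
        have h5 : ι * v j ≤ ι * vbar := by nlinarith [hvub j]
        have h6 : ι * v i0 ≤ ι * vbar := by nlinarith [hvub i0]
        have h7 := hjle j hj
        linarith
      ext k
      simp only [Set.mem_setOf_eq]
      constructor
      · intro hk j
        by_cases hkk : k = i0
        · subst hkk; exact hmax j (Finset.mem_univ j)
        · exact absurd (hk i0) (not_le.2 (hkey k hkk))
      · intro hk j
        by_cases hkk : k = i0
        · by_cases hjj : j = i0
          · rw [hjj, hkk]
          · exact hkk ▸ (hkey j hjj).le
        · exfalso
          have hki : β i0 * v i0 ≤ β k * v k := hk i0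
          have h8 := hjle k hkk
          have h9 : 0 < ι * vbar := mul_pos hι hv
          linarith
  -- volume of each A i
  have hAbound : ∀ i, volume (A i) ≤ ENNReal.ofReal (c * vbar ^ m) := by
    intro i
    set ins : (Fin m → ℝ) → Fin (m+1) → ℝ := fun y => i.insertNth 0 y with hins
    set g : (Fin m → ℝ) → ℝ := fun y => M i (ins y) / β i with hgdef
    have hcoord : ∀ j : Fin (m+1), Measurable (fun y : Fin m → ℝ => ins y j) := by
      intro j
      rcases eq_or_ne j i with rfl | hne
      · have hh : (fun y : Fin m → ℝ => ins y j) = fun _ => (0:ℝ) := by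
          funext y
          show (j.insertNth 0 y : Fin (m+1) → ℝ) j = 0
          simp
        rw [hh]
        exact measurable_const
      · obtain ⟨k, rfl⟩ := Fin.exists_succAbove_eq hne
        have hh : (fun y : Fin m → ℝ => ins y (i.succAbove k)) = fun y => y k := by
          funext y
          show (i.insertNth 0 y : Fin (m+1) → ℝ) (i.succAbove k) = y k
          simp
        rw [hh]
        exact measurable_pi_apply k
    have hgm : Measurable g := by
      apply Measurable.div_const
      have heq : (fun y : Fin m → ℝ => M i (ins y))
          = Finset.univ.sup' Finset.univ_nonempty
            (fun (j : Fin (m+1)) (y : Fin m → ℝ) =>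
              if j = i then (0:ℝ) else β j * ins y j) := by
        funext y
        rw [Finset.sup'_apply]
      rw [heq]
      apply Finset.measurable_sup'
      intro j _
      rcases eq_or_ne j i with rfl | hne
      · simpa using (measurable_const : Measurable fun _ : Fin m → ℝ => (0:ℝ))
      · simpa [hne] using (hcoord j).const_mul (β j)
    have hsub : A i ⊆ {v : Fin (m + 1) → ℝ | (∀ j, v (i.succAbove j) ∈ Set.Icc 0 vbar) ∧
        v i ∈ Set.Icc (g fun j => v (i.succAbove j)) ((g fun j => v (i.succAbove j)) + c)} := by
      rintro v ⟨hv0, h1, h2⟩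
      have hMeq : M i (ins (fun j => v (i.succAbove j))) = M i v := by
        apply Finset.sup'_congr _ rfl
        intro j _
        rcases eq_or_ne j i with rfl | hne
        · simp
        · obtain ⟨k, rfl⟩ := Fin.exists_succAbove_eq hne
          rw [if_neg hne, if_neg hne]
          congr 1
          show (i.insertNth 0 (fun j => v (i.succAbove j)) : Fin (m+1) → ℝ) (i.succAbove k)
            = v (i.succAbove k)
          simp
      have hgv : g (fun j => v (i.succAbove j)) = M i v / β i := by
        have h0 : g (fun j => v (i.succAbove j))
            = M i (ins fun j => v (i.succAbove j)) / β i := rfl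
        rw [h0, hMeq]
      refine ⟨fun j => hv0 _, ?_, ?_⟩
      · rw [hgv]
        exact (div_le_iff₀ (hβpos i)).2 (by linarith [mul_comm (v i) (β i)])
      · rw [hgv]
        have e1 : v i ≤ (M i v + 2*ι*vbar) / β i :=
          (le_div_iff₀ (hβpos i)).2 (by linarith [mul_comm (v i) (β i)])
        have e2 : (M i v + 2*ι*vbar) / β i = M i v / β i + (2*ι*vbar) / β i := add_div _ _ _
        have e3 : (2*ι*vbar) / β i ≤ c := by
          rw [hcdef]
          gcongr
          exact hβ i
        linarith
    calc volume (A i) ≤ _ := measure_mono hsub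
      _ ≤ ENNReal.ofReal (c * vbar ^ m) := slab_volume_le m i vbar c hv.le hcpos.le g hgm
  -- volume of the cube
  have hcubevol : volume {v : Fin (m+1) → ℝ | ∀ j, v j ∈ Set.Icc (0:ℝ) vbar}
      = ENNReal.ofReal (vbar ^ (m+1)) := by
    have : {v : Fin (m+1) → ℝ | ∀ j, v j ∈ Set.Icc (0:ℝ) vbar}
        = Set.pi Set.univ fun _ => Set.Icc (0:ℝ) vbar := by
      ext v; simp [Set.mem_pi, Pi.le_def, forall_and]
    rw [this, volume_pi_pi]
    simp [Real.volume_Icc, ← ENNReal.ofReal_pow hv.le]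
  set b : ℝ := ((m:ℝ)+1) * (c * vbar ^ m) with hbdef
  have hbnn : 0 ≤ b := by positivity
  have hmain : ENNReal.ofReal (vbar ^ (m+1)) ≤ volume S + ENNReal.ofReal b := by
    calc ENNReal.ofReal (vbar ^ (m+1))
        = volume {v : Fin (m+1) → ℝ | ∀ j, v j ∈ Set.Icc (0:ℝ) vbar} := hcubevol.symm
      _ ≤ volume (S ∪ ⋃ i, A i) := measure_mono hcover
      _ ≤ volume S + volume (⋃ i, A i) := measure_union_le _ _
      _ ≤ volume S + ∑ i, volume (A i) := add_le_add le_rfl (measure_iUnion_fintype_le _ _)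
      _ ≤ volume S + ∑ _i : Fin (m+1), ENNReal.ofReal (c * vbar ^ m) :=
          add_le_add le_rfl (Finset.sum_le_sum fun i _ => hAbound i)
      _ = volume S + ((m+1 : ℕ) : ENNReal) * ENNReal.ofReal (c * vbar ^ m) := by
          rw [Finset.sum_const, Finset.card_univ, Fintype.card_fin, nsmul_eq_mul]
      _ = volume S + ENNReal.ofReal b := by
          congr 1
          rw [hbdef, ← ENNReal.ofReal_natCast (m+1), ← ENNReal.ofReal_mul (by positivity)]
          congr 1
          push_cast
          ring
  -- final arithmetic
  have hfinal : ENNReal.ofReal (vbar ^ (m+1) - b) ≤ volume S := by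
    rcases le_or_gt (vbar ^ (m+1) - b) 0 with hle | hlt
    · rw [ENNReal.ofReal_eq_zero.2 hle]; exact zero_le
    · have hsum : ENNReal.ofReal (vbar ^ (m+1) - b) + ENNReal.ofReal b
          = ENNReal.ofReal (vbar ^ (m+1)) := by
        rw [← ENNReal.ofReal_add hlt.le hbnn]
        ring_nf
      rw [← hsum] at hmain
      exact (ENNReal.add_le_add_iff_right ENNReal.ofReal_ne_top).1 hmain
  have hgoal_eq : vbar ^ (m+1) * (1 - 2 * ((m+1:ℕ):ℝ) * ι / βlow) = vbar ^ (m+1) - b := by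
    rw [hbdef, hcdef]
    push_cast
    ring
  have hrw : ENNReal.ofReal (vbar ^ (m+1) * (1 - 2 * ((m+1:ℕ):ℝ) * ι / βlow))
      = ENNReal.ofReal (vbar ^ (m+1) - b) := by rw [hgoal_eq]
  rw [hrw]
  exact hfinal
end

section
/- For a uniform random vector v on [0, v̄]ⁿ and fixed β ∈ [β̲, ∞)ⁿ with β̲ > 0, the probability that the gap between the largest and second-largest elements of {βᵢvᵢ : i ∈ [n]} is at most 2·v̄·ι is at most 2nι/β̲. -/
open scoped ENNReal

open MeasureTheory Set

/-- For a uniform random vector `v` on `[0, v̄]ⁿ` and fixed `β ∈ [β̲, ∞)ⁿ` with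
`β̲ > 0`, the probability that the gap between the largest and second-largest
elements of `{βᵢ vᵢ}` is at most `2 v̄ ι` is at most `2 n ι / β̲`.
(The event states: some maximizer `i` and some maximizer `j ≠ i` of the remaining
values satisfy `βᵢ vᵢ - βⱼ vⱼ ≤ 2 v̄ ι`.) -/
theorem uniform_gap_small_probability
    (n : ℕ) (vbar βlow ι : ℝ) (hv : 0 < vbar) (hβl : 0 < βlow) (hι : 0 < ι)
    (β : Fin (n + 2) → ℝ) (hβ : ∀ i, βlow ≤ β i) :
    ((ENNReal.ofReal (vbar ^ (n + 2)))⁻¹ •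
        MeasureTheory.volume.restrict (Set.univ.pi fun _ : Fin (n + 2) => Set.Icc (0 : ℝ) vbar))
      {v : Fin (n + 2) → ℝ | ∃ i, (∀ k, β k * v k ≤ β i * v i) ∧
        ∃ j, j ≠ i ∧ (∀ k, k ≠ i → β k * v k ≤ β j * v j) ∧
          β i * v i - β j * v j ≤ 2 * vbar * ι} ≤
      ENNReal.ofReal (2 * (n + 2) * ι / βlow) := by
  classical
  set μ0 : Measure ℝ := volume.restrict (Icc (0:ℝ) vbar) with hμ0def
  have hβpos : ∀ k, (0:ℝ) < β k := fun k => lt_of_lt_of_le hβl (hβ k)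
  -- the restricted volume is a product measure
  have hpi : volume.restrict (Set.univ.pi fun _ : Fin (n + 2) => Icc (0:ℝ) vbar)
      = Measure.pi (fun _ : Fin (n + 2) => μ0) := by
    refine (Measure.pi_eq (μ := fun _ : Fin (n + 2) => μ0) fun s hs => ?_).symm
    rw [Measure.restrict_apply (MeasurableSet.univ_pi hs), ← Set.pi_inter_distrib,
      volume_pi_pi]
    exact Finset.prod_congr rfl fun k _ => (Measure.restrict_apply (hs k)).symm
  -- the covering sets
  set A : Fin (n + 2) → Set (Fin (n + 2) → ℝ) := fun i =>
    {v | ∃ j, j ≠ i ∧ (∀ k, k ≠ i → β k * v k ≤ β j * v j) ∧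
      β j * v j ≤ β i * v i ∧ β i * v i - β j * v j ≤ 2 * vbar * ι} with hAdef
  have hm : ∀ k : Fin (n + 2), Measurable fun v : Fin (n + 2) → ℝ => β k * v k :=
    fun k => by fun_prop
  have hAmeas : ∀ i, MeasurableSet (A i) := by
    intro i
    have : A i = ⋃ j, ⋃ (_ : j ≠ i),
        ((⋂ k, ⋂ (_ : k ≠ i), {v : Fin (n + 2) → ℝ | β k * v k ≤ β j * v j}) ∩
          ({v | β j * v j ≤ β i * v i} ∩ {v | β i * v i - β j * v j ≤ 2 * vbar * ι})) := by
      ext v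
      simp only [hAdef, Set.mem_setOf_eq, Set.mem_iUnion, Set.mem_inter_iff, Set.mem_iInter]
      tauto
    rw [this]
    refine MeasurableSet.iUnion fun j => MeasurableSet.iUnion fun _ => ?_
    exact ((MeasurableSet.iInter fun k => MeasurableSet.iInter fun _ =>
        measurableSet_le (hm k) (hm j))).inter
      ((measurableSet_le (hm j) (hm i)).inter
        (measurableSet_le ((hm i).sub (hm j)) measurable_const))
  -- event is covered
  have hsub : {v : Fin (n + 2) → ℝ | ∃ i, (∀ k, β k * v k ≤ β i * v i) ∧
      ∃ j, j ≠ i ∧ (∀ k, k ≠ i → β k * v k ≤ β j * v j) ∧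
        β i * v i - β j * v j ≤ 2 * vbar * ι} ⊆ ⋃ i, A i := by
    rintro v ⟨i, hi, j, hj, hjk, hgap⟩
    exact Set.mem_iUnion.2 ⟨i, j, hj, hjk, hi j, hgap⟩
  -- per-coordinate bound
  have key : ∀ i, Measure.pi (fun _ : Fin (n + 2) => μ0) (A i) ≤
      ENNReal.ofReal (2 * vbar * ι / βlow) * (ENNReal.ofReal vbar) ^ (n + 1) := by
    intro i
    have hmp := measurePreserving_piFinSuccAbove (fun _ : Fin (n + 2) => μ0) i
    set e := MeasurableEquiv.piFinSuccAbove (fun _ : Fin (n + 2) => ℝ) i with hedef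
    have hms : MeasurableSet (e.symm ⁻¹' A i) := e.symm.measurable (hAmeas i)
    have h1 : Measure.pi (fun _ : Fin (n + 2) => μ0) (A i)
        = (μ0.prod (Measure.pi fun _ : Fin (n + 1) => μ0)) (e.symm ⁻¹' A i) := by
      have h2 : Measure.pi (fun _ : Fin (n + 2) => μ0) (A i)
          = ((Measure.pi (fun _ : Fin (n + 2) => μ0)).map e) (e.symm ⁻¹' A i) := by
        rw [e.map_apply]
        congr 1
        ext v
        simp
      rw [h2, hmp.map_eq]
    rw [h1, Measure.prod_apply_symm hms]
    -- nonemptiness of the erase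
    obtain ⟨i', hi'⟩ := exists_ne i
    have hne : (Finset.univ.erase i).Nonempty := ⟨i', Finset.mem_erase.2 ⟨hi', Finset.mem_univ _⟩⟩
    -- bound each slice
    have hslice : ∀ y : Fin (n + 1) → ℝ,
        μ0 ((fun t => (t, y)) ⁻¹' (e.symm ⁻¹' A i)) ≤ ENNReal.ofReal (2 * vbar * ι / βlow) := by
      intro y
      set m : ℝ := (Finset.univ.erase i).sup' hne (fun k => β k * (Fin.insertNth (α := fun _ => ℝ) i 0 y) k) with hmdef
      have hval : ∀ (t : ℝ) (k : Fin (n + 2)), k ≠ i →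
          Fin.insertNth (α := fun _ => ℝ) i t y k = Fin.insertNth (α := fun _ => ℝ) i 0 y k := by
        intro t k hk
        obtain ⟨z, rfl⟩ := Fin.exists_succAbove_eq hk
        rw [Fin.insertNth_apply_succAbove, Fin.insertNth_apply_succAbove]
      have hsubI : (fun t => (t, y)) ⁻¹' (e.symm ⁻¹' A i) ⊆
          Icc (m / β i) ((m + 2 * vbar * ι) / β i) := by
        intro t ht
        have htA : Fin.insertNth (α := fun _ => ℝ) i t y ∈ A i := ht
        obtain ⟨j, hj, hjk, hle, hgap⟩ := htA
        have hjv : β j * (Fin.insertNth (α := fun _ => ℝ) i t y) j = β j * (Fin.insertNth (α := fun _ => ℝ) i 0 y) j := by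
          rw [hval t j hj]
        have hmeq : m = β j * (Fin.insertNth (α := fun _ => ℝ) i t y) j := by
          refine le_antisymm ?_ ?_
          · refine Finset.sup'_le hne _ fun k hk => ?_
            have hk' := (Finset.mem_erase.1 hk).1
            rw [← hval t k hk']
            exact hjk k hk'
          · rw [hjv]
            exact Finset.le_sup' (fun k => β k * (Fin.insertNth (α := fun _ => ℝ) i 0 y) k) (Finset.mem_erase.2 ⟨hj, Finset.mem_univ _⟩)
        have hit : (Fin.insertNth (α := fun _ => ℝ) i t y) i = t := Fin.insertNth_apply_same (α := fun _ => ℝ) i t y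
        rw [hit] at hle hgap
        constructor
        · rw [div_le_iff₀ (hβpos i), mul_comm]
          rw [hmeq]; exact hle
        · rw [le_div_iff₀ (hβpos i), mul_comm]
          rw [hmeq]; linarith
      calc μ0 ((fun t => (t, y)) ⁻¹' (e.symm ⁻¹' A i))
          ≤ volume (Icc (m / β i) ((m + 2 * vbar * ι) / β i)) :=
            le_trans (measure_mono hsubI) (Measure.restrict_le_self _)
        _ = ENNReal.ofReal ((m + 2 * vbar * ι) / β i - m / β i) := Real.volume_Icc
        _ = ENNReal.ofReal (2 * vbar * ι / β i) := by
            rw [div_sub_div_same]; ring_nf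
        _ ≤ ENNReal.ofReal (2 * vbar * ι / βlow) := by
            apply ENNReal.ofReal_le_ofReal
            exact div_le_div_of_nonneg_left (by positivity) hβl (hβ i)
    calc ∫⁻ y, μ0 ((fun t => (t, y)) ⁻¹' (e.symm ⁻¹' A i)) ∂(Measure.pi fun _ : Fin (n+1) => μ0)
        ≤ ∫⁻ _, ENNReal.ofReal (2 * vbar * ι / βlow) ∂(Measure.pi fun _ : Fin (n+1) => μ0) :=
          lintegral_mono hslice
      _ = ENNReal.ofReal (2 * vbar * ι / βlow) * (ENNReal.ofReal vbar) ^ (n + 1) := by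
          rw [lintegral_const]
          congr 1
          rw [Measure.pi_univ]
          simp [hμ0def, Real.volume_Icc, sub_zero]
  -- assemble
  rw [Measure.smul_apply, smul_eq_mul, hpi]
  have hle1 : Measure.pi (fun _ : Fin (n + 2) => μ0)
      {v : Fin (n + 2) → ℝ | ∃ i, (∀ k, β k * v k ≤ β i * v i) ∧
        ∃ j, j ≠ i ∧ (∀ k, k ≠ i → β k * v k ≤ β j * v j) ∧
          β i * v i - β j * v j ≤ 2 * vbar * ι}
      ≤ (n + 2 : ℕ) * (ENNReal.ofReal (2 * vbar * ι / βlow) * (ENNReal.ofReal vbar) ^ (n + 1)) := by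
    calc Measure.pi (fun _ : Fin (n + 2) => μ0) _
        ≤ Measure.pi (fun _ : Fin (n + 2) => μ0) (⋃ i, A i) := measure_mono hsub
      _ ≤ ∑' i, Measure.pi (fun _ : Fin (n + 2) => μ0) (A i) := measure_iUnion_le _
      _ = ∑ i, Measure.pi (fun _ : Fin (n + 2) => μ0) (A i) := tsum_fintype _
      _ ≤ ∑ _i : Fin (n + 2), ENNReal.ofReal (2 * vbar * ι / βlow) * (ENNReal.ofReal vbar) ^ (n + 1) :=
          Finset.sum_le_sum fun i _ => key i
      _ = (n + 2 : ℕ) * (ENNReal.ofReal (2 * vbar * ι / βlow) * (ENNReal.ofReal vbar) ^ (n + 1)) := by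
          rw [Finset.sum_const, Finset.card_univ, Fintype.card_fin, nsmul_eq_mul]
  refine le_trans (mul_le_mul_right hle1 _) ?_
  -- final arithmetic
  have hvb0 : (0:ℝ) ≤ vbar := hv.le
  have hc : ENNReal.ofReal (vbar ^ (n + 2)) = (ENNReal.ofReal vbar) ^ (n + 2) :=
    ENNReal.ofReal_pow hvb0 _
  have hsplit : ENNReal.ofReal (2 * vbar * ι / βlow)
      = ENNReal.ofReal vbar * ENNReal.ofReal (2 * ι / βlow) := by
    rw [← ENNReal.ofReal_mul hvb0]
    congr 1
    field_simp
  have hne0 : (ENNReal.ofReal vbar) ^ (n + 2) ≠ 0 := by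
    apply pow_ne_zero
    simpa using hv
  have hnetop : (ENNReal.ofReal vbar) ^ (n + 2) ≠ ⊤ := by
    exact ENNReal.pow_ne_top ENNReal.ofReal_ne_top
  rw [hc, hsplit]
  have heq : ((ENNReal.ofReal vbar) ^ (n + 2))⁻¹ *
      ((n + 2 : ℕ) * (ENNReal.ofReal vbar * ENNReal.ofReal (2 * ι / βlow) *
        (ENNReal.ofReal vbar) ^ (n + 1)))
      = (n + 2 : ℕ) * ENNReal.ofReal (2 * ι / βlow) := by
    have h2 : ((n + 2 : ℕ) : ℝ≥0∞) * (ENNReal.ofReal vbar * ENNReal.ofReal (2 * ι / βlow) *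
        (ENNReal.ofReal vbar) ^ (n + 1))
        = (ENNReal.ofReal vbar) ^ (n + 2) * ((n + 2 : ℕ) * ENNReal.ofReal (2 * ι / βlow)) := by
      ring
    rw [h2, ← mul_assoc, ENNReal.inv_mul_cancel hne0 hnetop, one_mul]
  rw [heq]
  have hcast : ((n + 2 : ℕ) : ℝ≥0∞) * ENNReal.ofReal (2 * ι / βlow)
      = ENNReal.ofReal (((n : ℝ) + 2) * (2 * ι / βlow)) := by
    rw [ENNReal.ofReal_mul (by positivity), show ((n : ℝ) + 2) = ((n + 2 : ℕ) : ℝ) by push_cast; ring,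
      ENNReal.ofReal_natCast]
  rw [hcast]
  exact ENNReal.ofReal_le_ofReal (le_of_eq (by ring))
end
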